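/- The pure braid group P_n (kernel of the canonical surjection B_n → S_n) is torsion-free, and consequently any finite subgroup of B_n injects into S_n under the canonical map. -/

import Mathlib

/-!
Garside's argument. In the positive braid monoid, `σ_i u = σ_j v` holds only if `u` and `v`
complete `σ_i` and `σ_j` to a common multiple of their least common multiple; the induction on
length behind this reduces to the cube condition for three generators. Hence the monoid is
cancellative, and elements with a common multiple have a least common multiple. Every positive
word of length `k` divides the `k`-th power of the fundamental braid `Δ`, so common multiples
always exist and, by Ore's theorem, the monoid embeds in its group of fractions; since `B_n` maps
to that group, positive words that are equal in `B_n` are equal in the monoid.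

Consequently `g ≤ h :↔ g⁻¹ h` positive is a left-invariant partial order on `B_n` with finite
intervals, in which the lower bounds of a nonempty set are directed, so every finite nonempty set
has a greatest lower bound. For a finite subgroup `H` with greatest lower bound `a` and `h ∈ H`,
`h a` is the greatest lower bound of `h H = H`, so `h = 1`: finite subgroups of `B_n`, in
particular those of `P_n`, are trivial.
-/

/-- The braid relations on `n` generators. -/
def braidRels (n : ℕ) : Set (FreeGroup (Fin n)) :=
  {r | ∃ i j : Fin n, (i : ℕ) + 2 ≤ (j : ℕ) ∧
      r = FreeGroup.of i * FreeGroup.of j * (FreeGroup.of j * FreeGroup.of i)⁻¹} ∪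
  {r | ∃ i j : Fin n, (i : ℕ) + 1 = (j : ℕ) ∧
      r = FreeGroup.of i * FreeGroup.of j * FreeGroup.of i *
        (FreeGroup.of j * FreeGroup.of i * FreeGroup.of j)⁻¹}

/-- The braid group `B_n` on `n` strands. -/
def BraidGroup (n : ℕ) : Type := PresentedGroup (braidRels (n - 1))

instance (n : ℕ) : Group (BraidGroup n) := by
  unfold BraidGroup; infer_instance

/-- The generator `σ_i` of the braid group. -/
def BraidGroup.gen (n : ℕ) (i : Fin (n - 1)) : BraidGroup n :=
  PresentedGroup.of (rels := braidRels (n - 1)) i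

/-- Old Mathlib definition (removed upstream): a monoid is torsion-free if no element other
than `1` has finite order. -/
def Monoid.IsTorsionFree (G : Type*) [Monoid G] : Prop :=
  ∀ g : G, g ≠ 1 → ¬IsOfFinOrder g

namespace BraidWord

def Far (i j : ℕ) : Prop := i + 2 ≤ j ∨ j + 2 ≤ i

def Adj (i j : ℕ) : Prop := i + 1 = j ∨ j + 1 = i

instance (i j : ℕ) : Decidable (Adj i j) := by unfold Adj; infer_instance

lemma Far.symm {i j : ℕ} (h : Far i j) : Far j i := Or.symm h
lemma Adj.symm {i j : ℕ} (h : Adj i j) : Adj j i := Or.symm h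
lemma Far.ne {i j : ℕ} (h : Far i j) : i ≠ j := by unfold Far at h; omega
lemma Adj.ne {i j : ℕ} (h : Adj i j) : i ≠ j := by unfold Adj at h; omega
lemma Far.not_adj {i j : ℕ} (h : Far i j) : ¬Adj i j := by unfold Far Adj at *; omega

lemma eq_or_adj_or_far (i j : ℕ) : i = j ∨ Adj i j ∨ Far i j := by
  unfold Adj Far; omega

lemma adj_or_far_of_ne {i j : ℕ} (h : i ≠ j) : Adj i j ∨ Far i j := by
  unfold Adj Far; omega

/-- One application of a braid relation inside a positive word. Letter `i` stands for `σ_i`;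
`Far` generators commute and `Adj` ones satisfy `σ_i σ_j σ_i = σ_j σ_i σ_j`. -/
inductive Step : List ℕ → List ℕ → Prop
  | comm (a b : List ℕ) {i j : ℕ} (h : Far i j) : Step (a ++ i :: j :: b) (a ++ j :: i :: b)
  | braid (a b : List ℕ) {i j : ℕ} (h : Adj i j) :
      Step (a ++ i :: j :: i :: b) (a ++ j :: i :: j :: b)

/-- Equality in the positive braid monoid. -/
def Eqv : List ℕ → List ℕ → Prop := Relation.ReflTransGen Step

instance : Trans Eqv Eqv Eqv := ⟨Relation.ReflTransGen.trans⟩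

namespace Step

variable {u v : List ℕ}

lemma symm (h : Step u v) : Step v u := by
  cases h with
  | comm a b h => exact .comm a b h.symm
  | braid a b h => exact .braid a b h.symm

lemma eqv (h : Step u v) : Eqv u v := .single h

lemma append_left (c : List ℕ) (h : Step u v) : Step (c ++ u) (c ++ v) := by
  cases h with
  | comm a b h => simpa using Step.comm (c ++ a) b h
  | braid a b h => simpa using Step.braid (c ++ a) b h

lemma append_right (c : List ℕ) (h : Step u v) : Step (u ++ c) (v ++ c) := by
  cases h with
  | comm a b h => simpa using Step.comm a (b ++ c) h
  | braid a b h => simpa using Step.braid a (b ++ c) h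

lemma reverse (h : Step u v) : Step u.reverse v.reverse := by
  cases h with
  | comm a b h => simpa using Step.comm b.reverse a.reverse h.symm
  | braid a b h => simpa using Step.braid b.reverse a.reverse h

lemma length_eq (h : Step u v) : u.length = v.length := by
  cases h <;> simp

lemma forall_mem (h : Step u v) {p : ℕ → Prop} (hu : ∀ x ∈ u, p x) : ∀ x ∈ v, p x := by
  cases h <;> · intro x hx; apply hu; simp only [List.mem_append, List.mem_cons] at hx ⊢; tauto

end Step

namespace Eqv

variable {u v w : List ℕ}

lemma rfl : Eqv u u := Relation.ReflTransGen.refl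

lemma trans (h : Eqv u v) (h' : Eqv v w) : Eqv u w := Relation.ReflTransGen.trans h h'

lemma symm (h : Eqv u v) : Eqv v u := by
  induction h with
  | refl => exact .rfl
  | tail _ h ih => exact h.symm.eqv.trans ih

lemma of_map {f : List ℕ → List ℕ} (hf : ∀ {u v}, Step u v → Step (f u) (f v))
    (h : Eqv u v) :
    Eqv (f u) (f v) :=
  Relation.ReflTransGen.lift f (fun _ _ h ↦ hf h) _ _ h

lemma append_left (c : List ℕ) (h : Eqv u v) : Eqv (c ++ u) (c ++ v) :=
  h.of_map (Step.append_left c)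

lemma append_right (c : List ℕ) (h : Eqv u v) : Eqv (u ++ c) (v ++ c) :=
  h.of_map (Step.append_right c)

lemma append {u' v' : List ℕ} (h : Eqv u u') (h' : Eqv v v') : Eqv (u ++ v) (u' ++ v') :=
  (h.append_right v).trans (h'.append_left u')

lemma cons (i : ℕ) (h : Eqv u v) : Eqv (i :: u) (i :: v) := h.append_left [i]

lemma reverse (h : Eqv u v) : Eqv u.reverse v.reverse := h.of_map Step.reverse

lemma length_eq (h : Eqv u v) : u.length = v.length := by
  induction h with
  | refl => rfl
  | tail _ h ih => exact ih.trans h.length_eq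

lemma forall_mem (h : Eqv u v) {p : ℕ → Prop} (hu : ∀ x ∈ u, p x) : ∀ x ∈ v, p x := by
  induction h with
  | refl => exact hu
  | tail _ h ih => exact h.forall_mem ih

end Eqv

lemma eqv_swap {i j : ℕ} (h : Far i j) (t : List ℕ) : Eqv (i :: j :: t) (j :: i :: t) :=
  (Step.comm [] t h).eqv

lemma eqv_braid {i j : ℕ} (h : Adj i j) (t : List ℕ) :
    Eqv (i :: j :: i :: t) (j :: i :: j :: t) :=
  (Step.braid [] t h).eqv

/-- The right complement: `i :: compl i j` and `j :: compl j i` both spell the least common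
multiple of `σ_i` and `σ_j`. -/
def compl (i j : ℕ) : List ℕ := if i = j then [] else if Adj i j then [j, i] else [j]

@[simp] lemma compl_self (i : ℕ) : compl i i = [] := by simp [compl]

lemma compl_of_adj {i j : ℕ} (h : Adj i j) : compl i j = [j, i] := by simp [compl, h.ne, h]

lemma compl_of_far {i j : ℕ} (h : Far i j) : compl i j = [j] := by
  simp [compl, h.ne, h.not_adj]

lemma eqv_cons_compl (i j : ℕ) : Eqv (i :: compl i j) (j :: compl j i) := by
  rcases eq_or_adj_or_far i j with rfl | h | h
  · exact .rfl
  · rw [compl_of_adj h, compl_of_adj h.symm]; exact eqv_braid h []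
  · rw [compl_of_far h, compl_of_far h.symm]; exact eqv_swap h []

lemma Step.cons_inv {i : ℕ} {u c : List ℕ} (h : Step (i :: u) c) :
    (∃ u', Step u u' ∧ c = i :: u') ∨
      ∃ p r, i ≠ p ∧ u = compl i p ++ r ∧ c = p :: (compl p i ++ r) := by
  generalize hx : i :: u = x at h
  cases h with
  | comm a b hf =>
    rcases a with _ | ⟨q, a⟩
    · obtain ⟨rfl, rfl⟩ := List.cons.inj hx
      exact .inr ⟨_, b, hf.ne, by simp [compl_of_far hf], by simp [compl_of_far hf.symm]⟩
    · obtain ⟨rfl, rfl⟩ := List.cons.inj hx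
      exact .inl ⟨_, .comm a b hf, rfl⟩
  | braid a b hf =>
    rcases a with _ | ⟨q, a⟩
    · obtain ⟨rfl, rfl⟩ := List.cons.inj hx
      exact .inr ⟨_, b, hf.ne, by simp [compl_of_adj hf], by simp [compl_of_adj hf.symm]⟩
    · obtain ⟨rfl, rfl⟩ := List.cons.inj hx
      exact .inl ⟨_, .braid a b hf, rfl⟩

lemma length_compl_comm (i j : ℕ) : (compl i j).length = (compl j i).length := by
  unfold compl; split_ifs <;> simp_all [Adj]

/-- Garside's lemma for words shorter than `ℓ`. -/
def GarsideBelow (ℓ : ℕ) : Prop :=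
  ∀ ⦃i j : ℕ⦄ ⦃u v : List ℕ⦄, u.length < ℓ → Eqv (i :: u) (j :: v) →
    ∃ w, Eqv u (compl i j ++ w) ∧ Eqv v (compl j i ++ w)

namespace GarsideBelow

variable {ℓ : ℕ} {i j p : ℕ} {u v r w₁ : List ℕ}

lemma cancel (IH : GarsideBelow ℓ) (hu : u.length < ℓ) (h : Eqv (i :: u) (i :: v)) :
    Eqv u v := by
  obtain ⟨w, hu, hv⟩ := IH hu h
  simp only [compl_self, List.nil_append] at hu hv
  exact hu.trans hv.symm

lemma far (IH : GarsideBelow ℓ) (hij : Far i j) (hu : u.length < ℓ)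
    (h : Eqv (i :: u) (j :: v)) :
    ∃ w, Eqv u (j :: w) ∧ Eqv v (i :: w) := by
  simpa only [compl_of_far hij, compl_of_far hij.symm, List.cons_append, List.nil_append]
    using IH hu h

lemma adj (IH : GarsideBelow ℓ) (hij : Adj i j) (hu : u.length < ℓ)
    (h : Eqv (i :: u) (j :: v)) :
    ∃ w, Eqv u (j :: i :: w) ∧ Eqv v (i :: j :: w) := by
  simpa only [compl_of_adj hij, compl_of_adj hij.symm, List.cons_append, List.nil_append]
    using IH hu h

lemma cancel_append (IH : GarsideBelow ℓ) (c : List ℕ) (hu : (c ++ u).length ≤ ℓ)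
    (h : Eqv (c ++ u) (c ++ v)) : Eqv u v := by
  induction c with
  | nil => exact h
  | cons a c ih =>
    simp only [List.cons_append, List.length_cons] at hu h
    exact ih (by omega) (IH.cancel (by omega) h)

/-! The induction step is the cube condition for three distinct generators `σ_i`, `σ_p`, `σ_j`,
in each of its seven configurations. -/

lemma far_far_far (IH : GarsideBelow ℓ) (hip : Far i p) (hpj : Far p j) (hij : Far i j)
    (hr : r.length < ℓ) (h : Eqv (i :: r) (j :: w₁)) (hv : Eqv v (p :: w₁)) :
    ∃ w, Eqv (p :: r) (j :: w) ∧ Eqv v (i :: w) := by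
  obtain ⟨w₂, hr₂, hw₁⟩ := IH.far hij hr h
  refine ⟨p :: w₂, (hr₂.cons p).trans (eqv_swap hpj _), ?_⟩
  exact hv.trans ((hw₁.cons p).trans (eqv_swap hip.symm _))

lemma far_far_adj (IH : GarsideBelow ℓ) (hip : Far i p) (hpj : Far p j) (hij : Adj i j)
    (hr : r.length < ℓ) (h : Eqv (i :: r) (j :: w₁)) (hv : Eqv v (p :: w₁)) :
    ∃ w, Eqv (p :: r) (j :: i :: w) ∧ Eqv v (i :: j :: w) := by
  obtain ⟨w₂, hr₂, hw₁⟩ := IH.adj hij hr h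
  refine ⟨p :: w₂, ?_, ?_⟩
  · calc Eqv (p :: r) (p :: j :: i :: w₂) := hr₂.cons p
      Eqv _ (j :: p :: i :: w₂) := eqv_swap hpj _
      Eqv _ (j :: i :: p :: w₂) := (eqv_swap hip.symm _).cons j
  · calc Eqv v (p :: i :: j :: w₂) := hv.trans (hw₁.cons p)
      Eqv _ (i :: p :: j :: w₂) := eqv_swap hip.symm _
      Eqv _ (i :: j :: p :: w₂) := (eqv_swap hpj _).cons i

lemma far_adj_far (IH : GarsideBelow ℓ) (hip : Far i p) (hpj : Adj p j) (hij : Far i j)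
    (hr : r.length < ℓ) (h : Eqv (i :: r) (j :: p :: w₁)) (hv : Eqv v (p :: j :: w₁)) :
    ∃ w, Eqv (p :: r) (j :: w) ∧ Eqv v (i :: w) := by
  obtain ⟨w₂, hr₂, hw₁⟩ := IH.far hij hr h
  have := hr₂.length_eq; have := hw₁.length_eq; simp only [List.length_cons] at *
  obtain ⟨w₃, hw₁', hw₂⟩ := IH.far hip.symm (by omega) hw₁
  refine ⟨p :: j :: w₃, ?_, ?_⟩
  · calc Eqv (p :: r) (p :: j :: p :: w₃) := (hr₂.trans (hw₂.cons j)).cons p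
      Eqv _ (j :: p :: j :: w₃) := eqv_braid hpj _
  · calc Eqv v (p :: j :: i :: w₃) := hv.trans ((hw₁'.cons j).cons p)
      Eqv _ (p :: i :: j :: w₃) := (eqv_swap hij.symm _).cons p
      Eqv _ (i :: p :: j :: w₃) := eqv_swap hip.symm _

lemma far_adj_adj (IH : GarsideBelow ℓ) (hip : Far i p) (hpj : Adj p j) (hij : Adj i j)
    (hr : r.length < ℓ) (h : Eqv (i :: r) (j :: p :: w₁)) (hv : Eqv v (p :: j :: w₁)) :
    ∃ w, Eqv (p :: r) (j :: i :: w) ∧ Eqv v (i :: j :: w) := by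
  obtain ⟨w₂, hr₂, hw₁⟩ := IH.adj hij hr h
  have := hr₂.length_eq; have := hw₁.length_eq; simp only [List.length_cons] at *
  obtain ⟨w₃, hw₁', hw₂⟩ := IH.far hip.symm (by omega) hw₁
  have := hw₂.length_eq; simp only [List.length_cons] at *
  obtain ⟨w₄, hw₂', hw₃⟩ := IH.adj hpj.symm (by omega) hw₂
  refine ⟨p :: j :: i :: w₄, ?_, ?_⟩
  · calc Eqv (p :: r) (p :: j :: i :: p :: j :: w₄) :=
          (hr₂.trans ((hw₂'.cons i).cons j)).cons p
      Eqv _ (p :: j :: p :: i :: j :: w₄) := ((eqv_swap hip _).cons j).cons p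
      Eqv _ (j :: p :: j :: i :: j :: w₄) := eqv_braid hpj _
      Eqv _ (j :: p :: i :: j :: i :: w₄) := ((eqv_braid hij.symm _).cons p).cons j
      Eqv _ (j :: i :: p :: j :: i :: w₄) := (eqv_swap hip.symm _).cons j
  · calc Eqv v (p :: j :: i :: j :: p :: w₄) :=
          hv.trans (((hw₁'.trans (hw₃.cons i)).cons j).cons p)
      Eqv _ (p :: i :: j :: i :: p :: w₄) := (eqv_braid hij.symm _).cons p
      Eqv _ (i :: p :: j :: i :: p :: w₄) := eqv_swap hip.symm _
      Eqv _ (i :: p :: j :: p :: i :: w₄) := (((eqv_swap hip _).cons j).cons p).cons i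
      Eqv _ (i :: j :: p :: j :: i :: w₄) := (eqv_braid hpj _).cons i

lemma adj_far_far (IH : GarsideBelow ℓ) (hip : Adj i p) (hpj : Far p j) (hij : Far i j)
    (hr : r.length + 1 < ℓ) (h : Eqv (i :: p :: r) (j :: w₁)) (hv : Eqv v (p :: w₁)) :
    ∃ w, Eqv (p :: i :: r) (j :: w) ∧ Eqv v (i :: w) := by
  obtain ⟨w₂, hr₂, hw₁⟩ := IH.far hij (by simpa using hr) h
  obtain ⟨w₃, hr₃, hw₂⟩ := IH.far hpj (by omega) hr₂
  refine ⟨p :: i :: w₃, ?_, ?_⟩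
  · calc Eqv (p :: i :: r) (p :: i :: j :: w₃) := (hr₃.cons i).cons p
      Eqv _ (p :: j :: i :: w₃) := (eqv_swap hij _).cons p
      Eqv _ (j :: p :: i :: w₃) := eqv_swap hpj _
  · calc Eqv v (p :: i :: p :: w₃) := hv.trans ((hw₁.trans (hw₂.cons i)).cons p)
      Eqv _ (i :: p :: i :: w₃) := eqv_braid hip.symm _

lemma adj_far_adj (IH : GarsideBelow ℓ) (hip : Adj i p) (hpj : Far p j) (hij : Adj i j)
    (hr : r.length + 1 < ℓ) (h : Eqv (i :: p :: r) (j :: w₁)) (hv : Eqv v (p :: w₁)) :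
    ∃ w, Eqv (p :: i :: r) (j :: i :: w) ∧ Eqv v (i :: j :: w) := by
  obtain ⟨w₂, hr₂, hw₁⟩ := IH.adj hij (by simpa using hr) h
  have := hr₂.length_eq; simp only [List.length_cons] at *
  obtain ⟨w₃, hr₃, hw₂⟩ := IH.far hpj (by omega) hr₂
  obtain ⟨w₄, hw₂', hw₃⟩ := IH.adj hip (by omega) hw₂
  refine ⟨p :: i :: j :: w₄, ?_, ?_⟩
  · calc Eqv (p :: i :: r) (p :: i :: j :: i :: p :: w₄) :=
          ((hr₃.trans (hw₃.cons j)).cons i).cons p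
      Eqv _ (p :: j :: i :: j :: p :: w₄) := (eqv_braid hij _).cons p
      Eqv _ (j :: p :: i :: j :: p :: w₄) := eqv_swap hpj _
      Eqv _ (j :: p :: i :: p :: j :: w₄) := (((eqv_swap hpj.symm _).cons i).cons p).cons j
      Eqv _ (j :: i :: p :: i :: j :: w₄) := (eqv_braid hip.symm _).cons j
  · calc Eqv v (p :: i :: j :: p :: i :: w₄) :=
          hv.trans ((hw₁.trans ((hw₂'.cons j).cons i)).cons p)
      Eqv _ (p :: i :: p :: j :: i :: w₄) := ((eqv_swap hpj.symm _).cons i).cons p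
      Eqv _ (i :: p :: i :: j :: i :: w₄) := eqv_braid hip.symm _
      Eqv _ (i :: p :: j :: i :: j :: w₄) := ((eqv_braid hij _).cons p).cons i
      Eqv _ (i :: j :: p :: i :: j :: w₄) := (eqv_swap hpj _).cons i

lemma adj_adj_far (IH : GarsideBelow ℓ) (hip : Adj i p) (hpj : Adj p j) (hij : Far i j)
    (hr : r.length + 1 < ℓ) (h : Eqv (i :: p :: r) (j :: p :: w₁))
    (hv : Eqv v (p :: j :: w₁)) :
    ∃ w, Eqv (p :: i :: r) (j :: w) ∧ Eqv v (i :: w) := by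
  obtain ⟨w₂, hr₂, hw₁⟩ := IH.far hij (by simpa using hr) h
  have := hr₂.length_eq; have := hw₁.length_eq; simp only [List.length_cons] at *
  obtain ⟨w₃, hr₃, hw₂⟩ := IH.adj hpj (by omega) hr₂
  obtain ⟨w₄, hw₁', hw₂'⟩ := IH.adj hip.symm (by omega) hw₁
  have := hw₂.length_eq; simp only [List.length_cons] at *
  have h₃₄ : Eqv (j :: w₃) (i :: w₄) := IH.cancel (by simp; omega) (hw₂.symm.trans hw₂')
  obtain ⟨w₅, hw₃, hw₄⟩ := IH.far hij.symm (by omega) h₃₄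
  refine ⟨p :: j :: i :: p :: w₅, ?_, ?_⟩
  · calc Eqv (p :: i :: r) (p :: i :: j :: p :: i :: w₅) :=
          ((hr₃.trans ((hw₃.cons p).cons j)).cons i).cons p
      Eqv _ (p :: j :: i :: p :: i :: w₅) := (eqv_swap hij _).cons p
      Eqv _ (p :: j :: p :: i :: p :: w₅) := ((eqv_braid hip _).cons j).cons p
      Eqv _ (j :: p :: j :: i :: p :: w₅) := eqv_braid hpj _
  · calc Eqv v (p :: j :: i :: p :: j :: w₅) :=
          hv.trans (((hw₁'.trans ((hw₄.cons p).cons i)).cons j).cons p)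
      Eqv _ (p :: i :: j :: p :: j :: w₅) := (eqv_swap hij.symm _).cons p
      Eqv _ (p :: i :: p :: j :: p :: w₅) := ((eqv_braid hpj.symm _).cons i).cons p
      Eqv _ (i :: p :: i :: j :: p :: w₅) := eqv_braid hip.symm _
      Eqv _ (i :: p :: j :: i :: p :: w₅) := ((eqv_swap hij _).cons p).cons i

lemma head_step (IH : GarsideBelow ℓ) (hip : i ≠ p) (hlen : (compl i p ++ r).length ≤ ℓ)
    (h : Eqv (compl p i ++ r) (compl p j ++ w₁)) (hv : Eqv v (compl j p ++ w₁)) :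
    ∃ w, Eqv (compl i p ++ r) (compl i j ++ w) ∧ Eqv v (compl j i ++ w) := by
  rcases eq_or_ne j p with rfl | hjp
  · simp only [compl_self, List.nil_append] at h hv
    exact ⟨r, .rfl, hv.trans h.symm⟩
  rcases eq_or_ne i j with rfl | hij
  · have hr : Eqv r w₁ := IH.cancel_append _ (by simpa [length_compl_comm] using hlen) h
    exact ⟨compl i p ++ r, by simpa using Eqv.rfl,
      by simpa using hv.trans (hr.symm.append_left _)⟩
  rcases adj_or_far_of_ne hip with hip | hip <;> rcases adj_or_far_of_ne hjp.symm with hpj | hpj <;>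
    rcases adj_or_far_of_ne hij with hij | hij <;>
    simp only [compl_of_adj, compl_of_far, hip, hip.symm, hpj, hpj.symm, hij, hij.symm,
      List.cons_append, List.nil_append, List.length_cons] at h hv hlen ⊢
  · unfold Adj at hip hpj hij; omega
  · exact IH.adj_adj_far hip hpj hij (by omega) h hv
  · exact IH.adj_far_adj hip hpj hij (by omega) h hv
  · exact IH.adj_far_far hip hpj hij (by omega) h hv
  · exact IH.far_adj_adj hip hpj hij (by omega) h hv
  · exact IH.far_adj_far hip hpj hij (by omega) h hv
  · exact IH.far_far_adj hip hpj hij (by omega) h hv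
  · exact IH.far_far_far hip hpj hij (by omega) h hv

lemma succ (IH : GarsideBelow ℓ) : GarsideBelow (ℓ + 1) := by
  intro i j u v hu h
  generalize hx : i :: u = x at h
  replace hu : u.length ≤ ℓ := by omega
  induction h using Relation.ReflTransGen.head_induction_on generalizing i u with
  | refl =>
    obtain ⟨rfl, rfl⟩ := List.cons.inj hx
    exact ⟨u, by simpa using Eqv.rfl, by simpa using Eqv.rfl⟩
  | head hstep _ ih =>
    subst hx
    rcases hstep.cons_inv with ⟨u', hu', rfl⟩ | ⟨p, r, hip, rfl, rfl⟩
    · obtain ⟨w, hu'w, hvw⟩ := ih rfl (hu'.length_eq ▸ hu)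
      exact ⟨w, hu'.eqv.trans hu'w, hvw⟩
    · obtain ⟨w, hrw, hvw⟩ := ih rfl (by simpa [length_compl_comm] using hu)
      exact IH.head_step hip hu hrw hvw

end GarsideBelow

theorem garsideBelow (ℓ : ℕ) : GarsideBelow ℓ := by
  induction ℓ with
  | zero => intro _ _ _ _ hu; simp at hu
  | succ ℓ IH => exact IH.succ

theorem eqv_cons_cons_iff {i j : ℕ} {u v : List ℕ} :
    Eqv (i :: u) (j :: v) ↔ ∃ w, Eqv u (compl i j ++ w) ∧ Eqv v (compl j i ++ w) := by
  refine ⟨garsideBelow _ (Nat.lt_succ_self _), ?_⟩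
  rintro ⟨w, hu, hv⟩
  calc Eqv (i :: u) (i :: compl i j ++ w) := hu.cons i
    Eqv _ (j :: compl j i ++ w) := (eqv_cons_compl i j).append_right w
    Eqv _ (j :: v) := hv.symm.cons j

section Divisibility

variable {i : ℕ} {u v w c d : List ℕ}

lemma Eqv.of_cons (h : Eqv (i :: u) (i :: v)) : Eqv u v := by
  obtain ⟨w, hu, hv⟩ := eqv_cons_cons_iff.mp h
  simp only [compl_self, List.nil_append] at hu hv
  exact hu.trans hv.symm

lemma Eqv.append_cancel_left (c : List ℕ) (h : Eqv (c ++ u) (c ++ v)) : Eqv u v := by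
  induction c with
  | nil => exact h
  | cons i c ih => exact ih h.of_cons

lemma Eqv.append_cancel_right (c : List ℕ) (h : Eqv (u ++ c) (v ++ c)) : Eqv u v := by
  have := Eqv.append_cancel_left (u := u.reverse) (v := v.reverse) c.reverse
    (by simpa using h.reverse)
  simpa using this.reverse

def LeftDvd (u c : List ℕ) : Prop := ∃ x, Eqv c (u ++ x)

namespace LeftDvd

lemma refl (u : List ℕ) : LeftDvd u u := ⟨[], by simpa using Eqv.rfl⟩

lemma nil_left (c : List ℕ) : LeftDvd [] c := ⟨c, .rfl⟩

lemma append_self (u x : List ℕ) : LeftDvd u (u ++ x) := ⟨x, .rfl⟩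

lemma trans (h : LeftDvd u v) (h' : LeftDvd v w) : LeftDvd u w := by
  obtain ⟨x, hx⟩ := h
  obtain ⟨y, hy⟩ := h'
  exact ⟨x ++ y, by simpa using hy.trans (hx.append_right y)⟩

lemma of_eqv_left (h : Eqv u v) (hd : LeftDvd u c) : LeftDvd v c := by
  obtain ⟨x, hx⟩ := hd; exact ⟨x, hx.trans (h.append_right x)⟩

lemma of_eqv_right (h : Eqv c d) (hd : LeftDvd u c) : LeftDvd u d := by
  obtain ⟨x, hx⟩ := hd; exact ⟨x, h.symm.trans hx⟩

lemma append_right (y : List ℕ) (hd : LeftDvd u c) : LeftDvd u (c ++ y) := by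
  obtain ⟨x, hx⟩ := hd
  exact ⟨x ++ y, by simpa using hx.append_right y⟩

lemma append_left (p : List ℕ) (hd : LeftDvd u c) : LeftDvd (p ++ u) (p ++ c) := by
  obtain ⟨x, hx⟩ := hd; exact ⟨x, by simpa using hx.append_left p⟩

lemma cons (i : ℕ) (hd : LeftDvd u c) : LeftDvd (i :: u) (i :: c) := hd.append_left [i]

lemma append_cancel_left (p : List ℕ) (hd : LeftDvd (p ++ u) (p ++ c)) : LeftDvd u c := by
  obtain ⟨x, hx⟩ := hd
  exact ⟨x, Eqv.append_cancel_left p (by simpa using hx)⟩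

lemma forall_mem (hd : LeftDvd u c) {P : ℕ → Prop} (hc : ∀ x ∈ c, P x) :
    ∀ x ∈ u, P x := by
  obtain ⟨x, hx⟩ := hd
  exact fun a ha ↦ hx.forall_mem hc a (List.mem_append_left x ha)

end LeftDvd

def IsLcm (u₁ u₂ m : List ℕ) : Prop :=
  LeftDvd u₁ m ∧ LeftDvd u₂ m ∧ ∀ c, LeftDvd u₁ c → LeftDvd u₂ c → LeftDvd m c

lemma IsLcm.of_eqv {u₁ u₂ m m' : List ℕ} (h : IsLcm u₁ u₂ m) (hm : Eqv m m') :
    IsLcm u₁ u₂ m' :=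
  ⟨h.1.of_eqv_right hm, h.2.1.of_eqv_right hm,
    fun c h₁ h₂ ↦ (h.2.2 c h₁ h₂).of_eqv_left hm⟩

lemma isLcm_nil_left (u : List ℕ) : IsLcm [] u u :=
  ⟨.nil_left u, .refl u, fun _ _ h ↦ h⟩

lemma isLcm_nil_right (u : List ℕ) : IsLcm u [] u :=
  ⟨.refl u, .nil_left u, fun _ h _ ↦ h⟩

lemma isLcm_cons_cons {i j : ℕ} {u₁ u₂ m₂ m : List ℕ}
    (h₂ : IsLcm u₂ (compl j i) (compl j i ++ m₂))
    (h₁ : IsLcm u₁ (compl i j ++ m₂) m) : IsLcm (i :: u₁) (j :: u₂) (i :: m) := by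
  have hlcm : Eqv (j :: (compl j i ++ m₂)) (i :: (compl i j ++ m₂)) := by
    simpa using ((eqv_cons_compl i j).append_right m₂).symm
  refine ⟨h₁.1.cons i, ((h₂.1.cons j).of_eqv_right hlcm).trans (h₁.2.1.cons i), ?_⟩
  rintro c ⟨α, hα⟩ ⟨β, hβ⟩
  obtain ⟨w, hαw, hβw⟩ := eqv_cons_cons_iff.mp (hα.symm.trans hβ)
  have hm₂w : LeftDvd m₂ w :=
    LeftDvd.append_cancel_left _ (h₂.2.2 _ ⟨β, hβw.symm⟩ (.append_self _ w))
  have hm : LeftDvd m (u₁ ++ α) :=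
    h₁.2.2 _ (.append_self u₁ α) ((hm₂w.append_left _).of_eqv_right hαw.symm)
  exact (hm.cons i).of_eqv_right hα.symm

theorem exists_isLcm_of_leftDvd {u₁ u₂ c : List ℕ} (h₁ : LeftDvd u₁ c)
    (h₂ : LeftDvd u₂ c) : ∃ m, IsLcm u₁ u₂ m := by
  induction hc : c.length using Nat.strong_induction_on generalizing u₁ u₂ c with
  | _ n IH =>
  rcases u₁ with _ | ⟨i, u₁⟩
  · exact ⟨u₂, isLcm_nil_left u₂⟩
  rcases u₂ with _ | ⟨j, u₂⟩
  · exact ⟨i :: u₁, isLcm_nil_right _⟩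
  obtain ⟨a₁, ha₁⟩ := h₁
  obtain ⟨a₂, ha₂⟩ := h₂
  obtain ⟨w, h₁w, h₂w⟩ := eqv_cons_cons_iff.mp (ha₁.symm.trans ha₂)
  have hlen₁ := ha₁.length_eq
  have hlen₂ := ha₂.trans (h₂w.cons j) |>.length_eq
  simp only [List.cons_append, List.length_cons, List.length_append] at hlen₁ hlen₂
  obtain ⟨m₂, hm₂⟩ := IH _ (by simp; omega) ⟨a₂, h₂w.symm⟩ (.append_self _ w) rfl
  obtain ⟨m₂', hm₂'⟩ := hm₂.2.1
  have hm₂'w : LeftDvd m₂' w :=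
    LeftDvd.append_cancel_left _
      ((hm₂.2.2 _ ⟨a₂, h₂w.symm⟩ (.append_self _ w)).of_eqv_left hm₂')
  obtain ⟨m, hm⟩ := IH _ (by simp; omega) (.append_self u₁ a₁)
    ((hm₂'w.append_left _).of_eqv_right h₁w.symm) rfl
  exact ⟨i :: m, isLcm_cons_cons (hm₂.of_eqv hm₂') hm⟩

end Divisibility

def desc : ℕ → List ℕ
  | 0 => []
  | m + 1 => m :: desc m

/-- Garside's fundamental braid `Δ_m` on the generators `σ_0, …, σ_{m-1}`. -/
def delta : ℕ → List ℕ
  | 0 => []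
  | m + 1 => delta m ++ desc (m + 1)

lemma mem_desc {x m : ℕ} : x ∈ desc m ↔ x < m := by
  induction m with
  | zero => simp [desc]
  | succ m ih => simp [desc, ih]; omega

lemma lt_of_mem_delta {x m : ℕ} (h : x ∈ delta m) : x < m := by
  induction m with
  | zero => simp [delta] at h
  | succ m ih =>
    rcases List.mem_append.mp h with h | h
    · exact (ih h).trans m.lt_succ_self
    · exact mem_desc.mp h

lemma eqv_append_singleton_of_far {k : ℕ} {l : List ℕ} (h : ∀ x ∈ l, Far x k) :
    Eqv (l ++ [k]) (k :: l) := by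
  induction l with
  | nil => exact .rfl
  | cons a l ih =>
    simp only [List.mem_cons, forall_eq_or_imp] at h
    exact ((ih h.2).cons a).trans (eqv_swap h.1 l)

lemma desc_append_singleton_eqv {m i : ℕ} (h : i + 1 ≤ m) :
    Eqv (desc (m + 1) ++ [i + 1]) (i :: desc (m + 1)) := by
  induction m with
  | zero => omega
  | succ m ih =>
    by_cases hi : i < m
    · calc Eqv (desc (m + 2) ++ [i + 1]) ((m + 1) :: i :: desc (m + 1)) := (ih hi).cons (m + 1)
        Eqv _ (i :: desc (m + 2)) := eqv_swap (by unfold Far; omega) _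
    · obtain rfl : i = m := by omega
      have hfar : ∀ x ∈ desc i, Far x (i + 1) := fun x hx ↦ by
        rw [mem_desc] at hx; unfold Far; omega
      calc Eqv (desc (i + 2) ++ [i + 1]) ((i + 1) :: i :: (i + 1) :: desc i) :=
            ((eqv_append_singleton_of_far hfar).cons i).cons (i + 1)
        Eqv _ (i :: desc (i + 2)) := eqv_braid (by unfold Adj; omega) _

lemma range_append_singleton_eqv {m i : ℕ} (h : i + 1 ≤ m) :
    Eqv (List.range (m + 1) ++ [i]) ((i + 1) :: List.range (m + 1)) := by
  induction m with
  | zero => omega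
  | succ m ih =>
    by_cases hi : i < m
    · calc Eqv (List.range (m + 2) ++ [i]) (List.range (m + 1) ++ [i] ++ [m + 1]) := by
            simpa [List.range_succ (n := m + 1)] using
              (eqv_swap (by unfold Far; omega) []).append_left (List.range (m + 1))
        Eqv _ ((i + 1) :: List.range (m + 1) ++ [m + 1]) := (ih hi).append_right _
        _ = (i + 1) :: List.range (m + 2) := by simp [List.range_succ (n := m + 1)]
    · obtain rfl : i = m := by omega
      have hfar : ∀ x ∈ List.range i, Far x (i + 1) := fun x hx ↦ by
        rw [List.mem_range] at hx; unfold Far; omega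
      calc Eqv (List.range (i + 2) ++ [i]) (List.range i ++ [i + 1] ++ [i, i + 1]) := by
            simpa [List.range_succ] using
              (eqv_braid (by unfold Adj; omega) []).append_left (List.range i)
        Eqv _ ((i + 1) :: List.range i ++ [i, i + 1]) :=
          (eqv_append_singleton_of_far hfar).append_right _
        _ = (i + 1) :: List.range (i + 2) := by simp [List.range_succ]

lemma delta_succ_eqv (m : ℕ) : Eqv (delta (m + 1)) (List.range (m + 1) ++ delta m) := by
  induction m with
  | zero => exact .rfl
  | succ m ih =>
    have hfar : ∀ x ∈ delta m, Far x (m + 1) := fun x hx ↦ by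
      have := lt_of_mem_delta hx; unfold Far; omega
    calc Eqv (delta (m + 1) ++ desc (m + 2))
          (List.range (m + 1) ++ (delta m ++ [m + 1]) ++ desc (m + 1)) := by
          simpa [desc] using ih.append_right (desc (m + 2))
      Eqv _ (List.range (m + 1) ++ ((m + 1) :: delta m) ++ desc (m + 1)) :=
        ((eqv_append_singleton_of_far hfar).append_left _).append_right _
      _ = List.range (m + 2) ++ delta (m + 1) := by simp [delta, List.range_succ (n := m + 1)]

/-- Conjugation by `Δ_m` realises the flip `σ_i ↦ σ_{m-1-i}`. -/
lemma delta_append_singleton_eqv {m i : ℕ} (h : i < m) :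
    Eqv (delta m ++ [i]) ((m - 1 - i) :: delta m) := by
  induction m generalizing i with
  | zero => omega
  | succ m ih =>
    rcases i with _ | i
    · rcases Nat.eq_zero_or_pos m with rfl | hm
      · exact .rfl
      calc Eqv (delta (m + 1) ++ [0]) (List.range (m + 1) ++ (delta m ++ [0])) := by
            simpa using (delta_succ_eqv m).append_right [0]
        Eqv _ (List.range (m + 1) ++ [m - 1] ++ delta m) := by
          simpa using (ih hm).append_left (List.range (m + 1))
        Eqv _ (m :: List.range (m + 1) ++ delta m) := by
          have := range_append_singleton_eqv (m := m) (i := m - 1) (by omega)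
          rw [Nat.sub_add_cancel hm] at this
          exact this.append_right _
        Eqv _ (m :: delta (m + 1)) := (delta_succ_eqv m).symm.cons m
    · rw [show m + 1 - 1 - (i + 1) = m - 1 - i by omega]
      calc Eqv (delta (m + 1) ++ [i + 1]) (delta m ++ [i] ++ desc (m + 1)) := by
            simpa [delta] using (desc_append_singleton_eqv (by omega)).append_left (delta m)
        Eqv _ ((m - 1 - i) :: delta (m + 1)) := by
          simpa [delta] using (ih (by omega)).append_right (desc (m + 1))

def flipGen (m i : ℕ) : ℕ := m - 1 - i

lemma Step.map_flipGen {m : ℕ} {u v : List ℕ} (h : Step u v) (hu : ∀ x ∈ u, x < m) :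
    Step (u.map (flipGen m)) (v.map (flipGen m)) := by
  cases h with
  | @comm a b i j hf =>
    have := hu i (by simp); have := hu j (by simp)
    simpa using Step.comm (a.map (flipGen m)) (b.map (flipGen m))
      (i := flipGen m i) (j := flipGen m j) (by unfold Far at hf ⊢; unfold flipGen; omega)
  | @braid a b i j hf =>
    have := hu i (by simp); have := hu j (by simp)
    simpa using Step.braid (a.map (flipGen m)) (b.map (flipGen m))
      (i := flipGen m i) (j := flipGen m j) (by unfold Adj at hf ⊢; unfold flipGen; omega)

lemma Eqv.map_flipGen {m : ℕ} {u v : List ℕ} (h : Eqv u v) (hu : ∀ x ∈ u, x < m) :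
    Eqv (u.map (flipGen m)) (v.map (flipGen m)) := by
  induction h with
  | refl => exact .rfl
  | tail huv h ih => exact ih.trans (h.map_flipGen (Eqv.forall_mem huv hu)).eqv

lemma forall_mem_map_flipGen {m : ℕ} {u : List ℕ} (hu : ∀ x ∈ u, x < m) :
    ∀ x ∈ u.map (flipGen m), x < m := by
  simp only [List.mem_map, forall_exists_index, and_imp, forall_apply_eq_imp_iff₂, flipGen]
  intro x hx; have := hu x hx; omega

lemma append_delta_eqv {m : ℕ} {u : List ℕ} (hu : ∀ x ∈ u, x < m) :
    Eqv (u ++ delta m) (delta m ++ u.map (flipGen m)) := by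
  induction u with
  | nil => simpa using Eqv.rfl
  | cons k u ih =>
    simp only [List.mem_cons, forall_eq_or_imp] at hu
    have hk : m - 1 - flipGen m k = k := by unfold flipGen; omega
    calc Eqv (k :: u ++ delta m) ((k :: delta m) ++ u.map (flipGen m)) := by
          simpa using (ih hu.2).cons k
      Eqv _ (delta m ++ [flipGen m k] ++ u.map (flipGen m)) := by
        have := delta_append_singleton_eqv (m := m) (i := flipGen m k) (by unfold flipGen; omega)
        rw [hk] at this
        exact this.symm.append_right _
      _ = delta m ++ (k :: u).map (flipGen m) := by simp

lemma delta_eqv_map_flipGen (m : ℕ) : Eqv (delta m) ((delta m).map (flipGen m)) :=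
  Eqv.append_cancel_left (delta m) (append_delta_eqv fun _ ↦ lt_of_mem_delta)

lemma exists_delta_eqv_cons {i m : ℕ} (h : i < m) : ∃ w, Eqv (delta m) (i :: w) := by
  induction m with
  | zero => omega
  | succ m ih =>
    by_cases him : i < m
    · obtain ⟨w, hw⟩ := ih him
      exact ⟨w ++ desc (m + 1), by simpa [delta] using hw.append_right (desc (m + 1))⟩
    · obtain rfl : i = m := by omega
      have hbdd : ∀ x ∈ delta (i + 1), x < i + 1 := fun _ ↦ lt_of_mem_delta
      -- `Δ` is flip-invariant, and its ascending form starts with `σ_0`, which flips to `σ_i`.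
      refine ⟨(List.range' 1 i ++ delta i).map (flipGen (i + 1)), ?_⟩
      calc Eqv (delta (i + 1)) ((delta (i + 1)).map (flipGen (i + 1))) := delta_eqv_map_flipGen _
        Eqv _ ((List.range (i + 1) ++ delta i).map (flipGen (i + 1))) :=
          (delta_succ_eqv i).map_flipGen hbdd
        _ = _ := by simp [List.range_eq_range', List.range'_succ, flipGen]

def deltaPow (m k : ℕ) : List ℕ := (List.replicate k (delta m)).flatten

lemma deltaPow_succ (m k : ℕ) : deltaPow m (k + 1) = delta m ++ deltaPow m k := by
  simp [deltaPow, List.replicate_succ]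

lemma deltaPow_add (m a b : ℕ) : deltaPow m (a + b) = deltaPow m a ++ deltaPow m b := by
  simp only [deltaPow, List.replicate_add, List.flatten_append]

lemma lt_of_mem_deltaPow {x m k : ℕ} (h : x ∈ deltaPow m k) : x < m := by
  simp only [deltaPow, List.mem_flatten, List.mem_replicate] at h
  obtain ⟨l, ⟨-, rfl⟩, hx⟩ := h
  exact lt_of_mem_delta hx

lemma exists_append_deltaPow_eqv {m : ℕ} (k : ℕ) {u : List ℕ} (hu : ∀ x ∈ u, x < m) :
    ∃ u', (∀ x ∈ u', x < m) ∧ Eqv (u ++ deltaPow m k) (deltaPow m k ++ u') := by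
  induction k generalizing u with
  | zero => exact ⟨u, hu, by simpa [deltaPow] using Eqv.rfl⟩
  | succ k ih =>
    obtain ⟨u', hu', h⟩ := ih (forall_mem_map_flipGen hu)
    refine ⟨u', hu', ?_⟩
    simpa [deltaPow_succ] using
      ((append_delta_eqv hu).append_right (deltaPow m k)).trans
        (by simpa using h.append_left (delta m))

lemma leftDvd_deltaPow {m : ℕ} {u : List ℕ} (hu : ∀ x ∈ u, x < m) :
    LeftDvd u (deltaPow m u.length) := by
  induction u with
  | nil => exact .nil_left _
  | cons i u ih =>
    simp only [List.mem_cons, forall_eq_or_imp] at hu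
    obtain ⟨y, hy⟩ := ih hu.2
    obtain ⟨w, hw⟩ := exists_delta_eqv_cons hu.1
    have hwm : ∀ x ∈ w, x < m := fun x hx ↦
      hw.forall_mem (fun _ ↦ lt_of_mem_delta) x (List.mem_cons_of_mem i hx)
    obtain ⟨w', -, hw'⟩ := exists_append_deltaPow_eqv u.length hwm
    refine ⟨y ++ w', ?_⟩
    calc Eqv (deltaPow m (u.length + 1)) (i :: w ++ deltaPow m u.length) := by
          simpa [deltaPow_succ] using hw.append_right (deltaPow m u.length)
      Eqv _ (i :: deltaPow m u.length ++ w') := by simpa using hw'.cons i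
      Eqv _ (i :: u ++ (y ++ w')) := by simpa using (hy.append_right w').cons i

theorem exists_common_multiple {m : ℕ} {u v : List ℕ} (hu : ∀ x ∈ u, x < m)
    (hv : ∀ x ∈ v, x < m) : ∃ c, (∀ x ∈ c, x < m) ∧ LeftDvd u c ∧ LeftDvd v c := by
  refine ⟨deltaPow m (u.length + v.length), fun _ ↦ lt_of_mem_deltaPow, ?_, ?_⟩
  · rw [deltaPow_add]; exact (leftDvd_deltaPow hu).append_right _
  · rw [add_comm, deltaPow_add]; exact (leftDvd_deltaPow hv).append_right _

theorem exists_common_left_multiple {m : ℕ} {u v : List ℕ} (hu : ∀ x ∈ u, x < m)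
    (hv : ∀ x ∈ v, x < m) :
    ∃ x y, (∀ a ∈ x, a < m) ∧ (∀ a ∈ y, a < m) ∧ Eqv (x ++ u) (y ++ v) := by
  obtain ⟨c, hc, ⟨x, hx⟩, ⟨y, hy⟩⟩ :=
    exists_common_multiple (u := u.reverse) (v := v.reverse) (by simpa using hu) (by simpa using hv)
  have hxy := hx.symm.trans hy
  refine ⟨x.reverse, y.reverse, ?_, ?_, by simpa using hxy.reverse⟩
  · simpa using fun a ha ↦ hx.forall_mem hc a (List.mem_append_right _ ha)
  · simpa using fun a ha ↦ hy.forall_mem hc a (List.mem_append_right _ ha)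

def posCon : Con (FreeMonoid ℕ) where
  r u v := Eqv u.toList v.toList
  iseqv := ⟨fun _ ↦ .rfl, Eqv.symm, Eqv.trans⟩
  mul' h h' := by simpa using h.append h'

end BraidWord

open BraidWord OreLocalization

/-- The positive braid monoid on the generators `σ_0, σ_1, …`. -/
abbrev PosBraid : Type := posCon.Quotient

namespace PosBraid

def mk (u : List ℕ) : PosBraid := posCon.mk' (FreeMonoid.ofList u)

lemma mk_append (u v : List ℕ) : mk (u ++ v) = mk u * mk v := by
  simp [mk, FreeMonoid.ofList_append]

lemma mk_eq_mk {u v : List ℕ} : mk u = mk v ↔ Eqv u v := posCon.eq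

lemma mk_surjective : Function.Surjective mk := fun a ↦ by
  obtain ⟨x, rfl⟩ := posCon.mk'_surjective a
  exact ⟨x.toList, rfl⟩

instance : IsLeftCancelMul PosBraid where
  mul_left_cancel a := by
    obtain ⟨u, rfl⟩ := mk_surjective a
    intro b c h
    obtain ⟨v, rfl⟩ := mk_surjective b
    obtain ⟨w, rfl⟩ := mk_surjective c
    simp only [← mk_append, mk_eq_mk] at h ⊢
    exact h.append_cancel_left u

instance : IsRightCancelMul PosBraid where
  mul_right_cancel a := by
    obtain ⟨u, rfl⟩ := mk_surjective a
    intro b c h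
    obtain ⟨v, rfl⟩ := mk_surjective b
    obtain ⟨w, rfl⟩ := mk_surjective c
    simp only [← mk_append, mk_eq_mk] at h ⊢
    exact h.append_cancel_right u

lemma exists_mul_eq_mul (a b : PosBraid) : ∃ x y, x * a = y * b := by
  obtain ⟨u, rfl⟩ := mk_surjective a
  obtain ⟨v, rfl⟩ := mk_surjective b
  have hbdd : ∀ x ∈ u ++ v, x < (u ++ v).sum + 1 := fun x hx ↦
    Nat.lt_succ_of_le (List.le_sum_of_mem hx)
  obtain ⟨x, y, -, -, h⟩ := exists_common_left_multiple
    (fun x hx ↦ hbdd x (List.mem_append_left v hx))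
    (fun x hx ↦ hbdd x (List.mem_append_right u hx))
  exact ⟨mk x, mk y, by simpa only [← mk_append, mk_eq_mk] using h⟩

noncomputable instance : OreSet (⊤ : Submonoid PosBraid) where
  ore_right_cancel _ _ _ h := ⟨1, by simpa using mul_right_cancel h⟩
  oreNum a b := (exists_mul_eq_mul a b).choose_spec.choose
  oreDenom a b := ⟨(exists_mul_eq_mul a b).choose, trivial⟩
  ore_eq a b := (exists_mul_eq_mul a b).choose_spec.choose_spec

lemma numeratorHom_injective :
    Function.Injective
      (numeratorHom : PosBraid →* PosBraid[(⊤ : Submonoid PosBraid)⁻¹]) := by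
  intro a b h
  obtain ⟨s, c, hab, hs⟩ := oreDiv_eq_iff.mp h
  simp only [OneMemClass.coe_one, mul_one] at hs
  rw [Submonoid.smul_def, hs] at hab
  exact (mul_left_cancel hab).symm

noncomputable def toUnits : PosBraid →* (PosBraid[(⊤ : Submonoid PosBraid)⁻¹])ˣ :=
  IsUnit.liftRight numeratorHom fun a ↦ numerator_isUnit (S := ⊤) ⟨a, Submonoid.mem_top a⟩

lemma toUnits_injective : Function.Injective toUnits := fun _ _ h ↦
  numeratorHom_injective (congrArg Units.val h)

end PosBraid

namespace BraidWord

variable {N : ℕ}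

lemma lift_eq_one_of_mem_braidRels {G : Type*} [Group G] {f : Fin N → G}
    (hfar : ∀ i j : Fin N, (i : ℕ) + 2 ≤ j → f i * f j = f j * f i)
    (hadj : ∀ i j : Fin N, (i : ℕ) + 1 = j → f i * f j * f i = f j * f i * f j) :
    ∀ r ∈ braidRels N, FreeGroup.lift f r = 1 := by
  rintro r (⟨i, j, hij, rfl⟩ | ⟨i, j, hij, rfl⟩) <;>
    simp only [map_mul, map_inv, FreeGroup.lift_apply_of, mul_inv_eq_one]
  exacts [hfar i j hij, hadj i j hij]

/-- `σ_k`, with the junk value `1` for `k ≥ N`; it only ever meets words with letters `< N`. -/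
noncomputable def gen (N k : ℕ) : PresentedGroup (braidRels N) :=
  if h : k < N then PresentedGroup.of ⟨k, h⟩ else 1

@[simp] lemma gen_val (i : Fin N) : gen N i = PresentedGroup.of i := dif_pos i.isLt

noncomputable def eval (N : ℕ) (u : List ℕ) : PresentedGroup (braidRels N) :=
  (u.map (gen N)).prod

@[simp] lemma eval_nil : eval N [] = 1 := rfl

@[simp] lemma eval_cons (k : ℕ) (u : List ℕ) : eval N (k :: u) = gen N k * eval N u := by
  simp [eval]

@[simp] lemma eval_append (u v : List ℕ) : eval N (u ++ v) = eval N u * eval N v := by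
  simp [eval]

lemma gen_mul_gen_comm {i j : ℕ} (h : Far i j) : gen N i * gen N j = gen N j * gen N i := by
  unfold gen
  split_ifs with hi hj hj <;> try simp
  have key : ∀ a b : Fin N, (a : ℕ) + 2 ≤ b →
      (PresentedGroup.of a : PresentedGroup (braidRels N)) * .of b = .of b * .of a := fun a b h ↦
    PresentedGroup.mk_eq_mk_of_mul_inv_mem (Or.inl ⟨a, b, h, rfl⟩)
  rcases h with h | h
  exacts [key _ _ h, (key _ _ h).symm]

lemma gen_braid {i j : ℕ} (h : Adj i j) (hi : i < N) (hj : j < N) :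
    gen N i * gen N j * gen N i = gen N j * gen N i * gen N j := by
  have key : ∀ a b : Fin N, (a : ℕ) + 1 = b →
      (PresentedGroup.of a : PresentedGroup (braidRels N)) * .of b * .of a =
        .of b * .of a * .of b := fun a b h ↦
    PresentedGroup.mk_eq_mk_of_mul_inv_mem (Or.inr ⟨a, b, h, rfl⟩)
  unfold gen
  rw [dif_pos hi, dif_pos hj]
  rcases h with h | h
  exacts [key _ _ h, (key _ _ h).symm]

lemma Step.eval_eq {u v : List ℕ} (h : Step u v) (hu : ∀ x ∈ u, x < N) :
    eval N u = eval N v := by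
  cases h with
  | comm a b hf => simp [← mul_assoc, gen_mul_gen_comm hf]
  | braid a b hf =>
    simp [← mul_assoc, gen_braid hf (hu _ (by simp)) (hu _ (by simp))]

lemma Eqv.eval_eq {u v : List ℕ} (h : Eqv u v) (hu : ∀ x ∈ u, x < N) :
    eval N u = eval N v := by
  induction h with
  | refl => rfl
  | tail huv h ih => exact ih.trans (h.eval_eq (Eqv.forall_mem huv hu))

noncomputable def toFractions (N : ℕ) :
    PresentedGroup (braidRels N) →* (PosBraid[(⊤ : Submonoid PosBraid)⁻¹])ˣ :=
  PresentedGroup.toGroup (rels := braidRels N)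
    (f := fun i : Fin N ↦ PosBraid.toUnits (PosBraid.mk [(i : ℕ)])) <|
    lift_eq_one_of_mem_braidRels
      (fun i j h ↦ by
        simp only [← map_mul, ← PosBraid.mk_append, List.cons_append, List.nil_append]
        exact congrArg _ (PosBraid.mk_eq_mk.mpr (eqv_swap (.inl h) [])))
      (fun i j h ↦ by
        simp only [← map_mul, ← PosBraid.mk_append, List.cons_append, List.nil_append]
        exact congrArg _ (PosBraid.mk_eq_mk.mpr (eqv_braid (.inl h) [])))

lemma toFractions_eval {u : List ℕ} (hu : ∀ x ∈ u, x < N) :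
    toFractions N (eval N u) = PosBraid.toUnits (PosBraid.mk u) := by
  induction u with
  | nil => simp [PosBraid.mk]
  | cons k u ih =>
    simp only [List.mem_cons, forall_eq_or_imp] at hu
    rw [eval_cons, map_mul, ih hu.2, gen, dif_pos hu.1, toFractions, PresentedGroup.toGroup.of,
      ← map_mul, ← PosBraid.mk_append]
    rfl

theorem Eqv.of_eval_eq {u v : List ℕ} (hu : ∀ x ∈ u, x < N) (hv : ∀ x ∈ v, x < N)
    (h : eval N u = eval N v) : Eqv u v :=
  PosBraid.mk_eq_mk.mp <| PosBraid.toUnits_injective <| by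
    rw [← toFractions_eval hu, ← toFractions_eval hv, h]

lemma LeftDvd.length_le {u c : List ℕ} (h : LeftDvd u c) : u.length ≤ c.length := by
  obtain ⟨x, hx⟩ := h
  simp [hx.length_eq]

lemma finite_setOf_forall_lt_length_le (N K : ℕ) :
    {u : List ℕ | (∀ x ∈ u, x < N) ∧ u.length ≤ K}.Finite := by
  refine ((List.finite_length_le (Fin N) K).image (List.map Fin.val)).subset ?_
  rintro u ⟨hu, hK⟩
  exact ⟨u.pmap Fin.mk hu, by simpa using hK, by simp [List.map_pmap]⟩

end BraidWord

namespace BraidGroup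

variable {N : ℕ}

instance : PartialOrder (PresentedGroup (braidRels N)) where
  le g h := ∃ u, (∀ x ∈ u, x < N) ∧ h = g * eval N u
  le_refl g := ⟨[], by simp, by simp⟩
  le_trans := by
    rintro g h k ⟨u, hu, rfl⟩ ⟨v, hv, rfl⟩
    exact ⟨u ++ v, List.forall_mem_append.mpr ⟨hu, hv⟩, by simp [mul_assoc]⟩
  le_antisymm := by
    rintro g h ⟨u, hu, rfl⟩ ⟨v, hv, huv⟩
    have h1 : eval N (u ++ v) = eval N [] := by
      simpa [mul_assoc] using huv.symm
    have := (Eqv.of_eval_eq (List.forall_mem_append.mpr ⟨hu, hv⟩) (by simp) h1).length_eq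
    obtain ⟨rfl, -⟩ : u = [] ∧ v = [] := by simpa using this
    simp

lemma le_def {g h : PresentedGroup (braidRels N)} :
    g ≤ h ↔ ∃ u, (∀ x ∈ u, x < N) ∧ h = g * eval N u := Iff.rfl

instance : MulLeftMono (PresentedGroup (braidRels N)) where
  elim c g h := by
    rintro ⟨u, hu, rfl⟩
    exact ⟨u, hu, by simp [mul_assoc]⟩

lemma eval_le_eval_iff {u w : List ℕ} (hu : ∀ x ∈ u, x < N) (hw : ∀ x ∈ w, x < N) :
    eval N u ≤ eval N w ↔ LeftDvd u w := by
  refine ⟨fun ⟨v, hv, h⟩ ↦ ⟨v, Eqv.of_eval_eq hw ?_ (by simpa using h)⟩,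
    fun ⟨x, hx⟩ ↦ ?_⟩
  · exact List.forall_mem_append.mpr ⟨hu, hv⟩
  · refine ⟨x, fun a ha ↦ hx.forall_mem hw a (List.mem_append_right u ha), ?_⟩
    simpa using hx.eval_eq hw

lemma exists_eq_inv_mul (g : PresentedGroup (braidRels N)) :
    ∃ a b, (∀ x ∈ a, x < N) ∧ (∀ x ∈ b, x < N) ∧ g = (eval N a)⁻¹ * eval N b := by
  have hg : g ∈ Subgroup.closure (Set.range PresentedGroup.of) := by simp
  induction hg using Subgroup.closure_induction with
  | mem _ h =>
    obtain ⟨i, rfl⟩ := h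
    exact ⟨[], [i], by simp, by simp, by simp⟩
  | one => exact ⟨[], [], by simp, by simp, by simp⟩
  | mul g h _ _ ihg ihh =>
    obtain ⟨a, b, ha, hb, rfl⟩ := ihg
    obtain ⟨c, d, hc, hd, rfl⟩ := ihh
    obtain ⟨x, y, hx, hy, hxy⟩ := exists_common_left_multiple hb hc
    have h := hxy.eval_eq (N := N) (List.forall_mem_append.mpr ⟨hx, hb⟩)
    simp only [eval_append] at h
    refine ⟨x ++ a, y ++ d, List.forall_mem_append.mpr ⟨hx, ha⟩,
      List.forall_mem_append.mpr ⟨hy, hd⟩, ?_⟩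
    rw [eval_append, eval_append, eq_inv_mul_of_mul_eq h]
    group
  | inv g _ ih =>
    obtain ⟨a, b, ha, hb, rfl⟩ := ih
    exact ⟨b, a, hb, ha, by simp⟩

instance : IsCodirectedOrder (PresentedGroup (braidRels N)) where
  directed g h := by
    obtain ⟨a, b, ha, hb, rfl⟩ := exists_eq_inv_mul g
    obtain ⟨a', b', ha', hb', rfl⟩ := exists_eq_inv_mul h
    obtain ⟨x, y, hx, hy, hxy⟩ := exists_common_left_multiple ha ha'
    have h := hxy.eval_eq (N := N) (List.forall_mem_append.mpr ⟨hx, ha⟩)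
    refine ⟨(eval N (x ++ a))⁻¹, ⟨x ++ b, List.forall_mem_append.mpr ⟨hx, hb⟩, ?_⟩,
      ⟨y ++ b', List.forall_mem_append.mpr ⟨hy, hb'⟩, ?_⟩⟩
    · simp only [eval_append]; group
    · rw [h]; simp only [eval_append]; group

lemma finite_Icc (c s : PresentedGroup (braidRels N)) : (Set.Icc c s).Finite := by
  by_cases hcs : c ≤ s
  · obtain ⟨w, hw, rfl⟩ := hcs
    refine ((finite_setOf_forall_lt_length_le N w.length).image (c * eval N ·)).subset ?_
    rintro d ⟨⟨u, hu, rfl⟩, hds⟩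
    rw [mul_le_mul_iff_left, eval_le_eval_iff hu hw] at hds
    exact ⟨u, ⟨hu, hds.length_le⟩, rfl⟩
  · rw [Set.Icc_eq_empty hcs]
    exact Set.finite_empty

/-- Two lower bounds `c u₁` and `c u₂` lie below `c m` for a least common multiple `m` of the
positive words `u₁` and `u₂`. -/
lemma directedOn_lowerBounds {S : Set (PresentedGroup (braidRels N))} (hS : S.Nonempty) :
    DirectedOn (· ≤ ·) (lowerBounds S) := by
  intro b₁ hb₁ b₂ hb₂
  obtain ⟨c, ⟨u₁, hu₁, rfl⟩, ⟨u₂, hu₂, hb₂c⟩⟩ :=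
    directed_of (· ≥ ·) b₁ b₂
  obtain ⟨s₀, hs₀⟩ := hS
  have hdvd : ∀ s ∈ S, ∃ w, (∀ x ∈ w, x < N) ∧ s = c * eval N w ∧
      LeftDvd u₁ w ∧ LeftDvd u₂ w := by
    intro s hs
    obtain ⟨w, hw, rfl⟩ := (le_def.mpr ⟨u₁, hu₁, rfl⟩).trans (hb₁ hs)
    refine ⟨w, hw, rfl, ?_, ?_⟩
    · rw [← eval_le_eval_iff hu₁ hw, ← mul_le_mul_iff_left c]; exact hb₁ hs
    · rw [← eval_le_eval_iff hu₂ hw, ← mul_le_mul_iff_left c, ← hb₂c]; exact hb₂ hs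
  obtain ⟨w₀, hw₀, -, hw₀₁, hw₀₂⟩ := hdvd s₀ hs₀
  obtain ⟨m, hm₁, hm₂, hm⟩ := exists_isLcm_of_leftDvd hw₀₁ hw₀₂
  have hmN : ∀ x ∈ m, x < N := (hm w₀ hw₀₁ hw₀₂).forall_mem hw₀
  refine ⟨c * eval N m, fun s hs ↦ ?_, ?_, ?_⟩
  · obtain ⟨w, hw, rfl, hw₁, hw₂⟩ := hdvd s hs
    rw [mul_le_mul_iff_left, eval_le_eval_iff hmN hw]
    exact hm w hw₁ hw₂
  · dsimp only; rw [mul_le_mul_iff_left, eval_le_eval_iff hu₁ hmN]; exact hm₁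
  · dsimp only; rw [hb₂c, mul_le_mul_iff_left, eval_le_eval_iff hu₂ hmN]; exact hm₂

theorem exists_isGLB {S : Set (PresentedGroup (braidRels N))} (hS : S.Finite) (hne : S.Nonempty) :
    ∃ a, IsGLB S a := by
  obtain ⟨b₀, hb₀⟩ := hS.bddBelow
  obtain ⟨s₀, hs₀⟩ := hne
  have hD : (lowerBounds S ∩ Set.Ici b₀).Finite :=
    (finite_Icc b₀ s₀).subset fun d hd ↦ ⟨hd.2, hd.1 hs₀⟩
  obtain ⟨a, ⟨haS, hba⟩, hamax⟩ := hD.exists_maximal ⟨b₀, hb₀, Set.self_mem_Ici⟩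
  refine ⟨a, haS, fun b hb ↦ ?_⟩
  obtain ⟨d, hdS, hbd, had⟩ := directedOn_lowerBounds ⟨s₀, hs₀⟩ b hb a haS
  exact hbd.trans (hamax ⟨hdS, hba.trans had⟩ had)

/-- Left multiplication by `h ∈ H` permutes `H`, so it fixes the greatest lower bound of `H`. -/
theorem eq_bot_of_finite (H : Subgroup (PresentedGroup (braidRels N))) [Finite H] : H = ⊥ := by
  obtain ⟨a, ha⟩ := exists_isGLB (H : Set (PresentedGroup (braidRels N))).toFinite
    ⟨1, H.one_mem⟩
  refine (Subgroup.eq_bot_iff_forall H).mpr fun h hh ↦ ?_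
  have himage : (OrderIso.mulLeft h) '' H = H := by
    ext x
    simp [Set.image_mul_left, H.mul_mem_cancel_left (H.inv_mem hh)]
  have hha := (OrderIso.isGLB_image' (OrderIso.mulLeft h)).mpr ha
  rw [himage] at hha
  simpa using ha.unique hha

end BraidGroup

/-- The pure braid group `P_n`, i.e. the kernel of the canonical surjection `B_n → S_n`
(sending each generator `σ_i` to the transposition `(i, i+1)`), is torsion-free; consequently
any finite subgroup of `B_n` injects into `S_n` under the canonical map. -/
theorem pureBraidGroup_isTorsionFree (n : ℕ) (φ : BraidGroup n →* Equiv.Perm (Fin n)) :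
    Monoid.IsTorsionFree φ.ker ∧
      ∀ H : Subgroup (BraidGroup n), Finite H →
        Function.Injective (fun h : H => φ (h : BraidGroup n)) := by
  have eq_bot (H : Subgroup (BraidGroup n)) [Finite H] : H = ⊥ :=
    @BraidGroup.eq_bot_of_finite (n - 1) H ‹_›
  refine ⟨fun g hg hfin ↦ hg (Subtype.ext ?_), fun H _ ↦ ?_⟩
  · have : Finite (Subgroup.zpowers (g : BraidGroup n)) :=
      (finite_zpowers.mpr (φ.ker.subtype.isOfFinOrder hfin)).to_subtype
    exact Subgroup.zpowers_eq_bot.mp (eq_bot _)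
  · have : Subsingleton H := by rw [eq_bot H]; infer_instance
    exact Function.injective_of_subsingleton _
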